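/- arXiv:math/0603586 — 2 statements merged into one kernel-verified Lean document; each statement's English description precedes it below -/
import Mathlib

section
/- The regularized derivative of the Heaviside function is not equal to its distributional derivative in the global Colombeau algebra: with H the Heaviside function on ℝ, ρ ∈ C_c^∞(ℝ) with ∫ρ = 1, and h ∈ H, the net (H ∗ ρ'_{h(ε)})_ε (a representative of the regularized derivative ∂̃_h H) does not differ from 0 by a null net; in particular sup_{x∈K} |(H ∗ ρ'_{h(ε)})(x)| does not tend to 0 for suitable compact K containing 0. -/
open MeasureTheory Set Filter Topology

lemma conv_heaviside_aux {ρ : ℝ → ℝ} (hρ : ContDiff ℝ (⊤ : ℕ∞) ρ) (hρc : HasCompactSupport ρ)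
    {δ : ℝ} (hδ : 0 < δ) (x : ℝ) :
    MeasureTheory.convolution (fun x : ℝ => if 0 ≤ x then (1:ℝ) else 0)
      (deriv (fun z => δ⁻¹ * ρ (δ⁻¹ * z)))
      (ContinuousLinearMap.mul ℝ ℝ) MeasureTheory.volume x = δ⁻¹ * ρ (δ⁻¹ * x) := by
  set φ : ℝ → ℝ := fun z => δ⁻¹ * ρ (δ⁻¹ * z) with hφ
  have hφc : HasCompactSupport φ := by
    have : HasCompactSupport (ρ ∘ (Homeomorph.mulLeft₀ δ⁻¹ (by positivity)).toFun) :=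
      hρc.comp_homeomorph _
    exact this.mul_left
  have hφ1 : ContDiff ℝ 1 φ :=
    contDiff_const.mul ((hρ.of_le (by simp)).comp (contDiff_const.mul contDiff_id))
  calc MeasureTheory.convolution (fun x : ℝ => if 0 ≤ x then (1:ℝ) else 0) (deriv φ)
        (ContinuousLinearMap.mul ℝ ℝ) MeasureTheory.volume x
      = ∫ t, (if 0 ≤ t then (1:ℝ) else 0) * deriv φ (x - t) := by
        rw [MeasureTheory.convolution_def]; rfl
    _ = ∫ t, (Ici (0:ℝ)).indicator (fun t => deriv φ (x - t)) t := by
        congr 1; ext t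
        by_cases ht : (0:ℝ) ≤ t <;> simp [ht, indicator]
    _ = ∫ t in Ici (0:ℝ), deriv φ (x - t) := integral_indicator measurableSet_Ici
    _ = ∫ s in Iic x, deriv φ s := by
        have hmap : Measure.map (fun t : ℝ => x - t) volume = volume :=
          Measure.map_sub_left_eq_self volume x
        have := MeasureTheory.setIntegral_map_equiv (MeasurableEquiv.subLeft x)
          (deriv φ) (Iic x) (μ := volume)
        rw [show ((MeasurableEquiv.subLeft x : ℝ ≃ᵐ ℝ) : ℝ → ℝ) = fun t : ℝ => x - t from rfl,
          hmap] at this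
        rw [this]
        have hpre : (fun t : ℝ => x - t) ⁻¹' Iic x = Ici (0:ℝ) := by
          ext t
          simp [sub_le_iff_le_add]
        rw [hpre]
    _ = φ x := hφc.integral_Iic_deriv_eq hφ1 x

/-- A net of functions on `ℝ` is globally null: all derivatives are `O(ε^q)` in sup norm
for every `q > 0`. -/
def GlobalNullNet (g : ℝ → ℝ → ℝ) : Prop :=
  ∀ n : ℕ, ∀ q > (0:ℝ), ∃ C > (0:ℝ), ∃ ε₀ > (0:ℝ),
    ∀ ε ∈ Set.Ioo (0:ℝ) 1, ε < ε₀ → ∀ x : ℝ, |iteratedDeriv n (g ε) x| ≤ C * ε ^ q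

/-- The regularized derivative of the Heaviside function is not its distributional derivative
in the global Colombeau algebra: the representative net `(H ∗ ρ'_{h(ε)})_ε` is not null, and
its sup over a suitable compact set containing `0` does not tend to `0`. -/
theorem regularized_deriv_heaviside_ne {ρ : ℝ → ℝ}
    (hρ : ContDiff ℝ (⊤ : ℕ∞) ρ) (hρc : HasCompactSupport ρ) (hρ1 : ∫ x, ρ x = 1)
    (h : ℝ → ℝ) (hmono : MonotoneOn h (Set.Ioo (0:ℝ) 1))
    (hh : ∀ ε ∈ Set.Ioo (0:ℝ) 1, h ε ∈ Set.Ioo (0:ℝ) 1)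
    (hh0 : Tendsto h (𝓝[>] (0:ℝ)) (𝓝 0))
    (H : ℝ → ℝ) (hH : H = fun x => if 0 ≤ x then (1:ℝ) else 0)
    (g : ℝ → ℝ → ℝ)
    (hg : g = fun ε x => MeasureTheory.convolution H
        (deriv (fun z => (h ε)⁻¹ * ρ ((h ε)⁻¹ * z)))
        (ContinuousLinearMap.mul ℝ ℝ) MeasureTheory.volume x) :
    ¬ GlobalNullNet g ∧
    ∃ K : Set ℝ, IsCompact K ∧ (0:ℝ) ∈ K ∧
      ¬ Tendsto (fun ε => ⨆ x : K, |g ε x|) (𝓝[>] (0:ℝ)) (𝓝 0) := by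
  -- explicit formula for g
  have hgeq : ∀ ε ∈ Set.Ioo (0:ℝ) 1, ∀ x : ℝ, g ε x = (h ε)⁻¹ * ρ ((h ε)⁻¹ * x) := by
    intro ε hε x
    rw [hg, hH]
    exact conv_heaviside_aux hρ hρc (hh ε hε).1 x
  -- a point where ρ is nonzero
  obtain ⟨x₀, hx₀⟩ : ∃ x₀ : ℝ, ρ x₀ ≠ 0 := by
    by_contra hc
    push_neg at hc
    simp [hc] at hρ1
  set a : ℝ := |ρ x₀| with ha
  have ha0 : 0 < a := abs_pos.mpr hx₀
  set K : Set ℝ := Icc (-(|x₀|+1)) (|x₀|+1) with hK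
  -- key lower bound on values
  have hkey : ∀ ε ∈ Set.Ioo (0:ℝ) 1, a ≤ |g ε (h ε * x₀)| := by
    intro ε hε
    have hδ := hh ε hε
    have hδ0 : 0 < h ε := hδ.1
    have : g ε (h ε * x₀) = (h ε)⁻¹ * ρ x₀ := by
      rw [hgeq ε hε, inv_mul_cancel_left₀ (ne_of_gt hδ0)]
    rw [this, abs_mul, abs_of_pos (inv_pos.mpr hδ0)]
    have h1 : (1:ℝ) ≤ (h ε)⁻¹ := one_le_inv_iff₀.mpr ⟨hδ0, hδ.2.le⟩
    nlinarith [abs_nonneg (ρ x₀)]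
  have hmemK : ∀ ε ∈ Set.Ioo (0:ℝ) 1, h ε * x₀ ∈ K := by
    intro ε hε
    have hδ := hh ε hε
    have : |h ε * x₀| ≤ |x₀| + 1 := by
      rw [abs_mul, abs_of_pos hδ.1]
      nlinarith [abs_nonneg x₀, hδ.1, hδ.2]
    exact abs_le.mp this
  -- sup lower bound
  have hsup : ∀ ε ∈ Set.Ioo (0:ℝ) 1, a ≤ ⨆ x : K, |g ε x| := by
    intro ε hε
    have hδ0 : 0 < h ε := (hh ε hε).1
    have hcont : Continuous fun x => |g ε x| := by
      rw [show (fun x : ℝ => |g ε x|) = fun x => |(h ε)⁻¹ * ρ ((h ε)⁻¹ * x)| by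
        ext x; rw [hgeq ε hε x]]
      exact ((continuous_const.mul (hρ.continuous.comp
        (continuous_const.mul continuous_id))).abs)
    have hbdd : BddAbove (range fun x : K => |g ε x|) := by
      obtain ⟨b, hb⟩ := (isCompact_Icc.image hcont).bddAbove
      refine ⟨b, ?_⟩
      rintro y ⟨x, rfl⟩
      exact hb ⟨x, x.2, rfl⟩
    calc a ≤ |g ε (h ε * x₀)| := hkey ε hε
      _ ≤ ⨆ x : K, |g ε x| := le_ciSup hbdd ⟨h ε * x₀, hmemK ε hε⟩
  constructor
  · -- not a null net
    intro hnull
    obtain ⟨C, hC, ε₀, hε₀, hb⟩ := hnull 0 1 one_pos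
    set ε : ℝ := min (min ε₀ 1) (a / C) / 2 with hε
    have hεpos : 0 < ε := by positivity
    have hm1 : min (min ε₀ 1) (a / C) ≤ 1 := (min_le_left _ _).trans (min_le_right _ _)
    have hm2 : min (min ε₀ 1) (a / C) ≤ ε₀ := (min_le_left _ _).trans (min_le_left _ _)
    have hm3 : min (min ε₀ 1) (a / C) ≤ a / C := min_le_right _ _
    have hε1 : ε < 1 := by rw [hε]; linarith
    have hεε₀ : ε < ε₀ := by rw [hε]; linarith
    have hεa : C * ε < a := by
      have h1 : ε ≤ (a / C) / 2 := by rw [hε]; linarith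
      have h2 : C * ε ≤ C * ((a / C) / 2) := by nlinarith
      have h3 : C * ((a / C) / 2) = a / 2 := by field_simp
      nlinarith
    have hεIoo : ε ∈ Set.Ioo (0:ℝ) 1 := ⟨hεpos, hε1⟩
    have := hb ε hεIoo hεε₀ (h ε * x₀)
    rw [iteratedDeriv_zero, Real.rpow_one] at this
    have := (hkey ε hεIoo).trans this
    linarith
  · refine ⟨K, isCompact_Icc, ?_, ?_⟩
    · constructor <;> [linarith [abs_nonneg x₀]; linarith [abs_nonneg x₀]]
    · intro ht
      have hev1 : ∀ᶠ ε in 𝓝[>] (0:ℝ), |(⨆ x : K, |g ε x|) - 0| < a :=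
        (ht.eventually (Metric.ball_mem_nhds 0 ha0)).mono (fun ε hε => by
          simpa [Real.dist_eq] using hε)
      have hev2 : ∀ᶠ ε in 𝓝[>] (0:ℝ), ε ∈ Set.Ioo (0:ℝ) 1 := by
        filter_upwards [Ioo_mem_nhdsGT one_pos] with ε hε using hε
      obtain ⟨ε, h1, h2⟩ := (hev1.and hev2).exists
      have := hsup ε h2
      rw [sub_zero] at h1
      have := this.trans (le_abs_self _)
      linarith
end

section
/- Let b ∈ C^∞(ℝ) with t b(t) > 0 for t ≠ 0, B(t)=∫_0^t b, and let g : ℝ → ℂ be real analytic at 0 with a holomorphic extension G to a disc around 0 ∈ ℂ. Define v(t,x) = i ∫_0^t b(s) G'(x − i(B(t) − B(s))) ds for t ≥ 0 (small) and v(t,x) = 0 for t < 0. Then for small t > 0 and x near 0, v satisfies ∂_t v + i b(t) ∂_x v = i b(t) g'(x), i.e., Mv(t,x) = i b(t) H(t) g'(x) near the origin. -/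
open Complex Set MeasureTheory intervalIntegral Metric

/-- The correction-term construction in the sufficiency proof of Theorem 4: with `g` real
analytic at `0` with holomorphic extension `G`, the function
`v(t,x) = i ∫_0^t b(s) G'(x − i(B(t) − B(s))) ds` (for `t ≥ 0`, `v = 0` for `t < 0`)
satisfies `∂_t v + i b(t) ∂_x v = i b(t) g'(x)` for small `t > 0` and `x` near `0`. -/
theorem mizohata_correction_term
    (b : ℝ → ℝ) (hb : ContDiff ℝ (⊤ : ℕ∞) b) (hsign : ∀ t : ℝ, t ≠ 0 → t * b t > 0)
    (B : ℝ → ℝ) (hB : B = fun t => ∫ s in (0:ℝ)..t, b s)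
    (g : ℝ → ℂ) (G : ℂ → ℂ) (r : ℝ) (hr : 0 < r)
    (hG : DifferentiableOn ℂ G (Metric.ball (0:ℂ) r))
    (hGg : ∀ x : ℝ, |x| < r → G (x : ℂ) = g x)
    (v : ℝ → ℝ → ℂ)
    (hv : v = fun (t x : ℝ) =>
      if 0 ≤ t then
        Complex.I * ∫ s in (0:ℝ)..t,
          (b s : ℂ) * deriv G ((x : ℂ) - Complex.I * ((B t - B s : ℝ) : ℂ))
      else 0) :
    ∃ δ > (0:ℝ), ∀ t : ℝ, 0 < t → t < δ → ∀ x : ℝ, |x| < δ →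
      ∃ vt vx : ℂ,
        HasDerivAt (fun τ => v τ x) vt t ∧
        HasDerivAt (fun y : ℝ => v t y) vx x ∧
        vt + Complex.I * (b t : ℂ) * vx = Complex.I * (b t : ℂ) * deriv g x := by
  have hbc : Continuous b := hb.continuous
  have hbi : ∀ a c : ℝ, IntervalIntegrable b volume a c :=
    fun a c => hbc.intervalIntegrable a c
  -- derivative and continuity of B
  have hB' : ∀ t : ℝ, HasDerivAt B (b t) t := by
    intro t
    rw [hB]
    exact intervalIntegral.integral_hasDerivAt_right (hbi 0 t)
      (hbc.stronglyMeasurableAtFilter _ _) hbc.continuousAt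
  have hBcont : Continuous B := by
    have : Differentiable ℝ B := fun t => (hB' t).differentiableAt
    exact this.continuous
  have hB0 : B 0 = 0 := by rw [hB]; simp
  -- b nonnegative on [0, ∞)
  have hbpos : ∀ u : ℝ, 0 < u → 0 < b u := by
    intro u hu
    nlinarith [hsign u hu.ne']
  have hbnn : ∀ u : ℝ, 0 ≤ u → 0 ≤ b u := by
    intro u hu
    rcases eq_or_lt_of_le hu with h | h
    · have htend : Filter.Tendsto b (nhdsWithin 0 (Ioi 0)) (nhds (b 0)) :=
        hbc.continuousAt.mono_left nhdsWithin_le_nhds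
      have : 0 ≤ b 0 :=
        ge_of_tendsto htend (eventually_nhdsWithin_of_forall fun z hz => (hbpos z hz).le)
      rwa [← h]
    · exact (hbpos u h).le
  -- B is nonnegative and monotone on [0, ∞) in the needed sense
  have hBnn : ∀ s : ℝ, 0 ≤ s → 0 ≤ B s := by
    intro s hs
    rw [hB]
    exact intervalIntegral.integral_nonneg hs fun u hu => hbnn u hu.1
  have hBsub : ∀ s τ : ℝ, 0 ≤ s → s ≤ τ → 0 ≤ B τ - B s := by
    intro s τ hs hsτ
    have h1 : B τ - B s = ∫ u in s..τ, b u := by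
      rw [hB]
      exact intervalIntegral.integral_interval_sub_left (hbi 0 τ) (hbi 0 s)
    rw [h1]
    exact intervalIntegral.integral_nonneg hsτ fun u hu => hbnn u (hs.trans hu.1)
  -- choose δ
  obtain ⟨δ₁, hδ₁pos, hδ₁⟩ := Metric.continuousAt_iff.mp (hBcont.continuousAt (x := 0))
    (r / 2) (by positivity)
  set δ : ℝ := min δ₁ (r / 2) with hδdef
  have hδpos : 0 < δ := lt_min hδ₁pos (by positivity)
  have hδr : δ ≤ r / 2 := min_le_right _ _
  have hBsmall : ∀ τ : ℝ, |τ| < δ → |B τ| < r / 2 := by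
    intro τ hτ
    have := hδ₁ (x := τ) (by simpa [Real.dist_eq] using lt_of_lt_of_le hτ (min_le_left _ _))
    simpa [Real.dist_eq, hB0] using this
  -- membership in the ball
  have hmemball : ∀ (x c : ℝ), |x| < r / 2 → |c| < r / 2 →
      ((x : ℂ) - Complex.I * (c : ℂ)) ∈ Metric.ball (0:ℂ) r := by
    intro x c hx hc
    rw [Metric.mem_ball, dist_zero_right]
    calc ‖(x:ℂ) - Complex.I * (c:ℂ)‖ ≤ ‖(x:ℂ)‖ + ‖Complex.I * (c:ℂ)‖ := norm_sub_le _ _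
      _ = |x| + |c| := by simp
      _ < r := by linarith
  -- analyticity consequences
  have hGd : ∀ z ∈ Metric.ball (0:ℂ) r, HasDerivAt G (deriv G z) z :=
    fun z hz => (hG.differentiableAt (isOpen_ball.mem_nhds hz)).hasDerivAt
  have hG'cont : ContinuousOn (deriv G) (Metric.ball (0:ℂ) r) :=
    ((hG.analyticOnNhd isOpen_ball).deriv).continuousOn
  -- the key identity : v τ x = G x - G (x - i B τ)
  have key : ∀ τ x : ℝ, 0 ≤ τ → τ < δ → |x| < δ →
      v τ x = G (x:ℂ) - G ((x:ℂ) - Complex.I * ((B τ : ℝ) : ℂ)) := by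
    intro τ x hτ0 hτδ hx
    have hxr : |x| < r / 2 := lt_of_lt_of_le hx hδr
    have hBτ : |B τ| < r / 2 := hBsmall τ (by rwa [_root_.abs_of_nonneg hτ0])
    have hcmem : ∀ s ∈ Icc (0:ℝ) τ,
        ((x:ℂ) - Complex.I * ((B τ - B s : ℝ):ℂ)) ∈ Metric.ball (0:ℂ) r := by
      intro s hs
      refine hmemball _ _ hxr ?_
      have h1 : 0 ≤ B τ - B s := hBsub s τ hs.1 hs.2
      have h2 : B τ - B s ≤ B τ := by
        have := hBnn s hs.1; linarith
      rw [_root_.abs_of_nonneg h1]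
      exact lt_of_le_of_lt (h2.trans (le_abs_self _)) hBτ
    have hderiv : ∀ s ∈ uIcc (0:ℝ) τ,
        HasDerivAt (fun u : ℝ => G ((x:ℂ) - Complex.I * ((B τ - B u : ℝ):ℂ)))
          (deriv G ((x:ℂ) - Complex.I * ((B τ - B s : ℝ):ℂ)) * (Complex.I * (b s : ℂ))) s := by
      rw [uIcc_of_le hτ0]
      intro s hs
      have hinner : HasDerivAt (fun u : ℝ => (x:ℂ) - Complex.I * ((B τ - B u : ℝ):ℂ))
          (Complex.I * (b s : ℂ)) s := by
        have h1 : HasDerivAt (fun u : ℝ => B τ - B u) (-(b s)) s := (hB' s).const_sub (B τ)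
        have h3 := ((h1.ofReal_comp).const_mul Complex.I).const_sub ((x:ℂ))
        convert h3 using 1
        rfl
        push_cast
        ring
      have := (hGd _ (hcmem s hs)).comp s hinner
      simpa [Function.comp_def] using this
    have hψcont : Continuous fun s : ℝ => (x:ℂ) - Complex.I * ((B τ - B s : ℝ):ℂ) :=
      continuous_const.sub (continuous_const.mul
        (Complex.continuous_ofReal.comp (continuous_const.sub hBcont)))
    have hint : IntervalIntegrable
        (fun s : ℝ => deriv G ((x:ℂ) - Complex.I * ((B τ - B s : ℝ):ℂ)) * (Complex.I * (b s : ℂ)))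
        volume 0 τ := by
      apply ContinuousOn.intervalIntegrable
      rw [uIcc_of_le hτ0]
      exact (hG'cont.comp hψcont.continuousOn hcmem).mul
        (Continuous.continuousOn (continuous_const.mul (Complex.continuous_ofReal.comp hbc)))
    have hFTC := intervalIntegral.integral_eq_sub_of_hasDerivAt hderiv hint
    rw [hv]
    simp only [if_pos hτ0]
    calc Complex.I * ∫ s in (0:ℝ)..τ, (b s : ℂ) *
          deriv G ((x:ℂ) - Complex.I * ((B τ - B s : ℝ):ℂ))
        = ∫ s in (0:ℝ)..τ,
            deriv G ((x:ℂ) - Complex.I * ((B τ - B s : ℝ):ℂ)) * (Complex.I * (b s : ℂ)) := by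
          rw [← intervalIntegral.integral_const_mul]
          exact intervalIntegral.integral_congr fun s _ => by ring
      _ = G ((x:ℂ) - Complex.I * ((B τ - B τ : ℝ):ℂ))
          - G ((x:ℂ) - Complex.I * ((B τ - B 0 : ℝ):ℂ)) := hFTC
      _ = G (x:ℂ) - G ((x:ℂ) - Complex.I * ((B τ : ℝ):ℂ)) := by rw [hB0]; simp
  -- conclusion
  refine ⟨δ, hδpos, fun t ht htδ x hx => ?_⟩
  have hxr : |x| < r / 2 := lt_of_lt_of_le hx hδr
  have hBt : |B t| < r / 2 := hBsmall t (by rwa [_root_.abs_of_nonneg ht.le])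
  have hxmem : ((x:ℂ)) ∈ Metric.ball (0:ℂ) r := by
    have := hmemball x 0 hxr (by simpa using (by positivity : (0:ℝ) < r / 2))
    simpa using this
  have hz1mem : ((x:ℂ) - Complex.I * ((B t : ℝ):ℂ)) ∈ Metric.ball (0:ℂ) r :=
    hmemball x (B t) hxr hBt
  -- derivative in t
  have hinnerT : HasDerivAt (fun τ : ℝ => (x:ℂ) - Complex.I * ((B τ : ℝ):ℂ))
      (-(Complex.I * (b t : ℂ))) t := by
    have := (((hB' t).ofReal_comp).const_mul Complex.I).const_sub ((x:ℂ))
    convert this using 1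
  have hFt : HasDerivAt (fun τ : ℝ => G (x:ℂ) - G ((x:ℂ) - Complex.I * ((B τ : ℝ):ℂ)))
      (Complex.I * (b t : ℂ) * deriv G ((x:ℂ) - Complex.I * ((B t : ℝ):ℂ))) t := by
    have houter := (hGd _ hz1mem).comp t hinnerT
    have h2 := houter.const_sub (G (x:ℂ))
    have h3 : HasDerivAt (fun τ : ℝ => G (x:ℂ) - G ((x:ℂ) - Complex.I * ((B τ : ℝ):ℂ)))
        (-(deriv G ((x:ℂ) - Complex.I * ((B t : ℝ):ℂ)) * -(Complex.I * (b t : ℂ)))) t := by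
      simpa [Function.comp] using h2
    convert h3 using 1
    ring
  have hVt : HasDerivAt (fun τ => v τ x)
      (Complex.I * (b t : ℂ) * deriv G ((x:ℂ) - Complex.I * ((B t : ℝ):ℂ))) t := by
    apply hFt.congr_of_eventuallyEq
    filter_upwards [Ioo_mem_nhds ht htδ] with τ hτ
    exact key τ x hτ.1.le hτ.2 hx
  -- derivative in x
  have hGx : HasDerivAt (fun y : ℝ => G (y:ℂ)) (deriv G (x:ℂ)) x :=
    (hGd _ hxmem).comp_ofReal
  have hG1 : HasDerivAt (fun y : ℝ => G ((y:ℂ) - Complex.I * ((B t : ℝ):ℂ)))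
      (deriv G ((x:ℂ) - Complex.I * ((B t : ℝ):ℂ))) x := by
    have hi : HasDerivAt (fun y : ℂ => y - Complex.I * ((B t : ℝ):ℂ)) 1 ((x:ℂ)) :=
      (hasDerivAt_id _).sub_const _
    have hc := (hGd _ hz1mem).comp ((x:ℂ)) hi
    have hc' : HasDerivAt (fun y : ℂ => G (y - Complex.I * ((B t : ℝ):ℂ)))
        (deriv G ((x:ℂ) - Complex.I * ((B t : ℝ):ℂ))) ((x:ℂ)) := by
      simpa [Function.comp_def] using hc
    exact hc'.comp_ofReal
  have hFx : HasDerivAt (fun y : ℝ => G (y:ℂ) - G ((y:ℂ) - Complex.I * ((B t : ℝ):ℂ)))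
      (deriv G (x:ℂ) - deriv G ((x:ℂ) - Complex.I * ((B t : ℝ):ℂ))) x := hGx.sub hG1
  have hVx : HasDerivAt (fun y : ℝ => v t y)
      (deriv G (x:ℂ) - deriv G ((x:ℂ) - Complex.I * ((B t : ℝ):ℂ))) x := by
    apply hFx.congr_of_eventuallyEq
    have hball : Metric.ball (0:ℝ) δ ∈ nhds x := isOpen_ball.mem_nhds
      (by rwa [Metric.mem_ball, dist_zero_right, Real.norm_eq_abs])
    filter_upwards [hball] with y hy
    exact key t y ht.le htδ (by rwa [Metric.mem_ball, dist_zero_right, Real.norm_eq_abs] at hy)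
  -- the derivative of g
  have hgx : HasDerivAt g (deriv G (x:ℂ)) x := by
    apply hGx.congr_of_eventuallyEq
    have hball : Metric.ball (0:ℝ) r ∈ nhds x := isOpen_ball.mem_nhds
      (by rw [Metric.mem_ball, dist_zero_right, Real.norm_eq_abs]; linarith)
    filter_upwards [hball] with y hy
    exact (hGg y (by rwa [Metric.mem_ball, dist_zero_right, Real.norm_eq_abs] at hy)).symm
  have hdg : deriv g x = deriv G (x:ℂ) := hgx.deriv
  exact ⟨_, _, hVt, hVx, by rw [hdg]; ring⟩
end
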